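/- Let A = (M₁+φ) − (N₁+φ) be a splitting of A ∈ ℝ^{n×n} with φ diagonal and φ₁, φ₂ positive diagonal, suppose M_{φ₁} + φ_{φ₁} + φ₂ is nonsingular, and let G ≥ 0 satisfy |ψ(x) − ψ(y)| ≤ G|x − y| for all x, y ∈ ℝⁿ. If z* solves ICP(q,A,ψ) and z^{k+1} is obtained from z^k by one step of Method 3.1, then entrywise |z^{k+1} − z*| ≤ |(M_{φ₁}+φ_{φ₁}+φ₂)⁻¹| (|N_{φ₁}+φ_{φ₁}| + |A_{φ₁}−φ₂| + 2φ₂G) |z^k − z*|. -/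

import Mathlib

open Matrix Finset

noncomputable def specRad {n : ℕ} (A : Matrix (Fin n) (Fin n) ℝ) : ℝ :=
  (spectralRadius ℂ (A.map (algebraMap ℝ ℂ))).toReal

def matAbs {n : ℕ} (A : Matrix (Fin n) (Fin n) ℝ) : Matrix (Fin n) (Fin n) ℝ :=
  fun i j => |A i j|

def vecAbs {n : ℕ} (x : Fin n → ℝ) : Fin n → ℝ := fun i => |x i|

def cmpMat {n : ℕ} (A : Matrix (Fin n) (Fin n) ℝ) : Matrix (Fin n) (Fin n) ℝ :=
  fun i j => if i = j then |A i j| else -|A i j|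

def PosDiag {n : ℕ} (Φ : Matrix (Fin n) (Fin n) ℝ) : Prop :=
  Φ.IsDiag ∧ ∀ i, 0 < Φ i i

def ZMat {n : ℕ} (A : Matrix (Fin n) (Fin n) ℝ) : Prop :=
  ∀ i j, i ≠ j → A i j ≤ 0

def NonsingularMMatrix {n : ℕ} (A : Matrix (Fin n) (Fin n) ℝ) : Prop :=
  ZMat A ∧ IsUnit A.det ∧ ∀ i j, 0 ≤ A⁻¹ i j

def SDD {n : ℕ} (A : Matrix (Fin n) (Fin n) ℝ) : Prop :=
  ∀ i, ∑ j ∈ Finset.univ.erase i, |A i j| < |A i i|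

def ICPsol {n : ℕ} (A : Matrix (Fin n) (Fin n) ℝ) (q : Fin n → ℝ)
    (ψ : (Fin n → ℝ) → (Fin n → ℝ)) (z : Fin n → ℝ) : Prop :=
  (∀ i, 0 ≤ (A *ᵥ z + q) i) ∧ (∀ i, 0 ≤ (z - ψ z) i) ∧ (A *ᵥ z + q) ⬝ᵥ (z - ψ z) = 0

def HplusMatrix {n : ℕ} (A : Matrix (Fin n) (Fin n) ℝ) : Prop :=
  NonsingularMMatrix (cmpMat A) ∧ ∀ i, 0 < A i i

/-!
Write Method 3.1 as `M z^{k+1} = T(z^k)`. With `w = Az* + q` and `v = z* - ψ(z*)`,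
complementarity makes `φ₁w` and `φ₂v` nonnegative vectors with disjoint supports, so
`|φ₁w - φ₂v| = φ₁w + φ₂v`, which says exactly that `M z* = T(z*)`. Hence the error is
`M⁻¹(T(z^k) - T(z*))`, and `T` is entrywise Lipschitz with matrix `|N| + |R| + 2φ₂G`:
one `φ₂G` comes from the term `φ₂ψ` inside the modulus, the other from the one outside it.
-/

variable {n : ℕ}

lemma vecAbs_eq_abs (v : Fin n → ℝ) : vecAbs v = |v| := rfl

lemma vecAbs_mulVec_le (B : Matrix (Fin n) (Fin n) ℝ) (v : Fin n → ℝ) :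
    vecAbs (B *ᵥ v) ≤ matAbs B *ᵥ vecAbs v := fun i => by
  simp only [vecAbs, matAbs, mulVec, dotProduct, ← abs_mul]
  exact Finset.abs_sum_le_sum_abs _ _

lemma mulVec_le_mulVec_of_nonneg {B : Matrix (Fin n) (Fin n) ℝ} (hB : ∀ i j, 0 ≤ B i j)
    {u w : Fin n → ℝ} (h : u ≤ w) : B *ᵥ u ≤ B *ᵥ w := fun i =>
  dotProduct_le_dotProduct_of_nonneg_left h (hB i)

lemma matAbs_of_nonneg {B : Matrix (Fin n) (Fin n) ℝ} (hB : ∀ i j, 0 ≤ B i j) :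
    matAbs B = B :=
  funext₂ fun i j => abs_of_nonneg (hB i j)

lemma PosDiag.nonneg {P : Matrix (Fin n) (Fin n) ℝ} (hP : PosDiag P) (i j : Fin n) :
    0 ≤ P i j := by
  obtain rfl | hij := eq_or_ne i j
  · exact (hP.2 i).le
  · exact (hP.1 hij).ge

lemma Matrix.IsDiag.mulVec_apply {D : Matrix (Fin n) (Fin n) ℝ} (hD : D.IsDiag)
    (v : Fin n → ℝ) (i : Fin n) : (D *ᵥ v) i = D i i * v i := by
  conv_lhs => rw [← hD.diagonal_diag]
  exact mulVec_diagonal _ _ _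

lemma ICPsol.mul_apply_eq_zero {A : Matrix (Fin n) (Fin n) ℝ} {q : Fin n → ℝ}
    {ψ : (Fin n → ℝ) → (Fin n → ℝ)} {z : Fin n → ℝ} (hz : ICPsol A q ψ z) (i : Fin n) :
    (A *ᵥ z + q) i * (z - ψ z) i = 0 :=
  (Finset.sum_eq_zero_iff_of_nonneg fun j _ => mul_nonneg (hz.1 j) (hz.2.1 j)).mp hz.2.2 i
    (Finset.mem_univ i)

lemma vecAbs_diag_mulVec_sub_eq_add {w v : Fin n → ℝ} (hw : 0 ≤ w) (hv : 0 ≤ v)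
    (hwv : ∀ i, w i * v i = 0) {P₁ P₂ : Matrix (Fin n) (Fin n) ℝ} (hP₁ : P₁.IsDiag)
    (hP₁₀ : ∀ i, 0 ≤ P₁ i i) (hP₂ : P₂.IsDiag) (hP₂₀ : ∀ i, 0 ≤ P₂ i i) :
    vecAbs (P₁ *ᵥ w - P₂ *ᵥ v) = P₁ *ᵥ w + P₂ *ᵥ v := by
  funext i
  simp only [vecAbs, Pi.sub_apply, Pi.add_apply, hP₁.mulVec_apply, hP₂.mulVec_apply]
  rcases mul_eq_zero.mp (hwv i) with h | h
  · rw [h, mul_zero, zero_sub, zero_add, abs_neg, abs_of_nonneg (mul_nonneg (hP₂₀ i) (hv i))]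
  · rw [h, mul_zero, sub_zero, add_zero, abs_of_nonneg (mul_nonneg (hP₁₀ i) (hw i))]

/-- The right-hand side `T(z)` of Method 3.1, for `N = N_{φ₁} + φ_{φ₁}`, `R = A_{φ₁} - φ₂` and
`Pᵢ = φᵢ`. -/
def modulusRhs (N R P₁ P₂ : Matrix (Fin n) (Fin n) ℝ) (q : Fin n → ℝ)
    (ψ : (Fin n → ℝ) → (Fin n → ℝ)) (z : Fin n → ℝ) : Fin n → ℝ :=
  N *ᵥ z + vecAbs (R *ᵥ z + P₁ *ᵥ q + P₂ *ᵥ ψ z) - P₁ *ᵥ q + P₂ *ᵥ ψ z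

lemma ICPsol.mulVec_eq_modulusRhs {A : Matrix (Fin n) (Fin n) ℝ} {q : Fin n → ℝ}
    {ψ : (Fin n → ℝ) → (Fin n → ℝ)} {z : Fin n → ℝ} (hz : ICPsol A q ψ z)
    (N : Matrix (Fin n) (Fin n) ℝ) {P₁ P₂ : Matrix (Fin n) (Fin n) ℝ}
    (hP₁ : P₁.IsDiag) (hP₁₀ : ∀ i, 0 ≤ P₁ i i) (hP₂ : P₂.IsDiag) (hP₂₀ : ∀ i, 0 ≤ P₂ i i) :
    (N + P₁ * A + P₂) *ᵥ z = modulusRhs N (P₁ * A - P₂) P₁ P₂ q ψ z := by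
  have hinner : (P₁ * A - P₂) *ᵥ z + P₁ *ᵥ q + P₂ *ᵥ ψ z =
      P₁ *ᵥ (A *ᵥ z + q) - P₂ *ᵥ (z - ψ z) := by
    simp only [sub_mulVec, mulVec_add, mulVec_sub, ← mulVec_mulVec]
    abel
  rw [modulusRhs, hinner,
    vecAbs_diag_mulVec_sub_eq_add hz.1 hz.2.1 hz.mul_apply_eq_zero hP₁ hP₁₀ hP₂ hP₂₀]
  simp only [add_mulVec, mulVec_add, mulVec_sub, ← mulVec_mulVec]
  abel

lemma vecAbs_mulVec_le_mul_mulVec {P G : Matrix (Fin n) (Fin n) ℝ} (hP : ∀ i j, 0 ≤ P i j)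
    {u e : Fin n → ℝ} (hu : vecAbs u ≤ G *ᵥ e) : vecAbs (P *ᵥ u) ≤ (P * G) *ᵥ e :=
  calc vecAbs (P *ᵥ u) ≤ matAbs P *ᵥ vecAbs u := vecAbs_mulVec_le _ _
    _ = P *ᵥ vecAbs u := by rw [matAbs_of_nonneg hP]
    _ ≤ P *ᵥ (G *ᵥ e) := mulVec_le_mulVec_of_nonneg hP hu
    _ = (P * G) *ᵥ e := mulVec_mulVec _ _ _

lemma vecAbs_modulusRhs_sub_le (N R P₁ : Matrix (Fin n) (Fin n) ℝ)
    {P₂ G : Matrix (Fin n) (Fin n) ℝ} (hP₂ : ∀ i j, 0 ≤ P₂ i j) (q : Fin n → ℝ)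
    {ψ : (Fin n → ℝ) → (Fin n → ℝ)}
    (hψ : ∀ x y, vecAbs (ψ x - ψ y) ≤ G *ᵥ vecAbs (x - y)) (x y : Fin n → ℝ) :
    vecAbs (modulusRhs N R P₁ P₂ q ψ x - modulusRhs N R P₁ P₂ q ψ y) ≤
      (matAbs N + matAbs R + 2 • (P₂ * G)) *ᵥ vecAbs (x - y) := by
  set r : (Fin n → ℝ) → Fin n → ℝ := fun z => R *ᵥ z + P₁ *ᵥ q + P₂ *ᵥ ψ z
  set dψ := P₂ *ᵥ (ψ x - ψ y)
  have hsplit : modulusRhs N R P₁ P₂ q ψ x - modulusRhs N R P₁ P₂ q ψ y =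
      N *ᵥ (x - y) + (|r x| - |r y|) + dψ := by
    simp only [modulusRhs, vecAbs_eq_abs, r, dψ, mulVec_sub]
    abel
  have hr : r x - r y = R *ᵥ (x - y) + dψ := by
    simp only [r, dψ, mulVec_sub]
    abel
  have hdψ : |dψ| ≤ (P₂ * G) *ᵥ vecAbs (x - y) := vecAbs_mulVec_le_mul_mulVec hP₂ (hψ x y)
  rw [vecAbs_eq_abs, hsplit]
  calc |N *ᵥ (x - y) + (|r x| - |r y|) + dψ|
      ≤ |N *ᵥ (x - y)| + |(|r x| - |r y|)| + |dψ| :=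
        (abs_add_le _ _).trans (add_le_add_left (abs_add_le _ _) _)
    _ ≤ |N *ᵥ (x - y)| + (|R *ᵥ (x - y)| + |dψ|) + |dψ| := by
        gcongr
        calc |(|r x| - |r y|)| ≤ |r x - r y| := abs_abs_sub_abs_le _ _
          _ ≤ |R *ᵥ (x - y)| + |dψ| := hr ▸ abs_add_le _ _
    _ ≤ matAbs N *ᵥ vecAbs (x - y) + (matAbs R *ᵥ vecAbs (x - y) +
          (P₂ * G) *ᵥ vecAbs (x - y)) + (P₂ * G) *ᵥ vecAbs (x - y) := by
        gcongr
        · exact vecAbs_mulVec_le N (x - y)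
        · exact vecAbs_mulVec_le R (x - y)
    _ = (matAbs N + matAbs R + 2 • (P₂ * G)) *ᵥ vecAbs (x - y) := by
        simp only [add_mulVec, two_smul]
        abel

theorem stmt_5_general {n : ℕ} (A M₁ N₁ φ φ₁ φ₂ G : Matrix (Fin n) (Fin n) ℝ)
    (q : Fin n → ℝ) (ψ : (Fin n → ℝ) → (Fin n → ℝ))
    (hsplit : A = (M₁ + φ) - (N₁ + φ))
    (hφ₁ : PosDiag φ₁) (hφ₂ : PosDiag φ₂)
    (hns : IsUnit (φ₁ * M₁ + φ₁ * φ + φ₂).det)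
    (hψ : ∀ x y : Fin n → ℝ, ∀ i, |ψ x i - ψ y i| ≤ (G *ᵥ vecAbs (x - y)) i)
    (zstar : Fin n → ℝ) (hz : ICPsol A q ψ zstar)
    (zk zk1 : Fin n → ℝ)
    (hstep : zk1 = (φ₁ * M₁ + φ₁ * φ + φ₂)⁻¹ *ᵥ
      ((φ₁ * N₁ + φ₁ * φ) *ᵥ zk +
        vecAbs ((φ₁ * A - φ₂) *ᵥ zk + φ₁ *ᵥ q + φ₂ *ᵥ ψ zk) -
        φ₁ *ᵥ q + φ₂ *ᵥ ψ zk)) :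
    ∀ i, |zk1 i - zstar i| ≤
      ((matAbs ((φ₁ * M₁ + φ₁ * φ + φ₂)⁻¹) *
        (matAbs (φ₁ * N₁ + φ₁ * φ) + matAbs (φ₁ * A - φ₂) + 2 • (φ₂ * G))) *ᵥ
        vecAbs (zk - zstar)) i := by
  set M := φ₁ * M₁ + φ₁ * φ + φ₂
  set N := φ₁ * N₁ + φ₁ * φ
  set T := modulusRhs N (φ₁ * A - φ₂) φ₁ φ₂ q ψ
  have hM : M = N + φ₁ * A + φ₂ := by
    simp only [M, N, hsplit]
    noncomm_ring
  have hfix : M *ᵥ zstar = T zstar :=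
    hM ▸ hz.mulVec_eq_modulusRhs N hφ₁.1 (fun i => (hφ₁.2 i).le) hφ₂.1 (fun i => (hφ₂.2 i).le)
  have herr : zk1 - zstar = M⁻¹ *ᵥ (T zk - T zstar) := by
    rw [hstep, mulVec_sub, ← hfix, mulVec_mulVec, nonsing_inv_mul _ hns, one_mulVec]
    rfl
  intro i
  calc |zk1 i - zstar i| = vecAbs (M⁻¹ *ᵥ (T zk - T zstar)) i := by rw [← herr]; rfl
    _ ≤ (matAbs M⁻¹ *ᵥ vecAbs (T zk - T zstar)) i := vecAbs_mulVec_le _ _ i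
    _ ≤ (matAbs M⁻¹ *ᵥ ((matAbs N + matAbs (φ₁ * A - φ₂) + 2 • (φ₂ * G)) *ᵥ
          vecAbs (zk - zstar))) i :=
        mulVec_le_mulVec_of_nonneg (fun _ _ => abs_nonneg _)
          (vecAbs_modulusRhs_sub_le _ _ _ hφ₂.nonneg q hψ zk zstar) i
    _ = _ := by rw [mulVec_mulVec]

/-- the one-step error bound for Method 3.1. -/
theorem stmt_5 {n : ℕ} (A M₁ N₁ φ φ₁ φ₂ G : Matrix (Fin n) (Fin n) ℝ)
    (q : Fin n → ℝ) (ψ : (Fin n → ℝ) → (Fin n → ℝ))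
    (hsplit : A = (M₁ + φ) - (N₁ + φ))
    (hφ : φ.IsDiag) (hφ₁ : PosDiag φ₁) (hφ₂ : PosDiag φ₂)
    (hns : IsUnit (φ₁ * M₁ + φ₁ * φ + φ₂).det)
    (hG : ∀ i j, 0 ≤ G i j)
    (hψ : ∀ x y : Fin n → ℝ, ∀ i, |ψ x i - ψ y i| ≤ (G *ᵥ vecAbs (x - y)) i)
    (zstar : Fin n → ℝ) (hz : ICPsol A q ψ zstar)
    (zk zk1 : Fin n → ℝ)
    (hstep : zk1 = (φ₁ * M₁ + φ₁ * φ + φ₂)⁻¹ *ᵥ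
      ((φ₁ * N₁ + φ₁ * φ) *ᵥ zk +
        vecAbs ((φ₁ * A - φ₂) *ᵥ zk + φ₁ *ᵥ q + φ₂ *ᵥ ψ zk) -
        φ₁ *ᵥ q + φ₂ *ᵥ ψ zk)) :
    ∀ i, |zk1 i - zstar i| ≤
      ((matAbs ((φ₁ * M₁ + φ₁ * φ + φ₂)⁻¹) *
        (matAbs (φ₁ * N₁ + φ₁ * φ) + matAbs (φ₁ * A - φ₂) + 2 • (φ₂ * G))) *ᵥ
        vecAbs (zk - zstar)) i :=
  stmt_5_general A M₁ N₁ φ φ₁ φ₂ G q ψ hsplit hφ₁ hφ₂ hns hψ zstar hz zk zk1 hstep
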